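/- Let X = {Xⁿ} and Y = {Yⁿ} be arbitrary general sources where Xⁿ and Yⁿ take values in countable sets 𝒳ⁿ and 𝒴ⁿ respectively. Then for every n ≥ 1, every real number z_n, every γ > 0, and every mapping φ_n : 𝒳ⁿ → 𝒴ⁿ, it holds that d(φ_n(Xⁿ), Yⁿ) ≥ 2·Pr{Yⁿ ∉ T_n(z_n + γ)} − 2·Pr{Xⁿ ∈ S_n(z_n)} − 2·e^{−√n·γ}. -/

import Mathlib

open Filter MeasureTheory
open scoped BigOperators

noncomputable section

/-- Probability of a set under a probability mass function. -/
def prb {α : Type*} (P : α → ℝ) (s : Set α) : ℝ := ∑' a, s.indicator P a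

/-- Variational distance between two mass functions on the same countable set. -/
def varDist {α : Type*} (P Q : α → ℝ) : ℝ := ∑' a, |P a - Q a|

/-- `P` is a probability mass function. -/
def IsPMF {α : Type*} (P : α → ℝ) : Prop := (∀ a, 0 ≤ P a) ∧ HasSum P 1

/-- Pushforward of a mass function through a map. -/
def pushMap {α β : Type*} (P : α → ℝ) (φ : α → β) : β → ℝ :=
  fun b => ∑' a, Set.indicator {a | φ a = b} P a

/-- The uniform mass function on `Fin M`. -/
def unif (M : ℕ) : Fin M → ℝ := fun _ => 1 / (M : ℝ)

/-!
Let `B` be the set of points of mass `> e^{-√n z}`; it has at most `e^{√n z}` elements, and every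
other point of positive mass lies in `S_n(z)`. Test the two distributions on
`A = T_n(z + γ)ᶜ \ φ(B)`: the mass of `φ(Xⁿ)` on `A` is at most `Pr{Xⁿ ∈ S_n(z)}`, while `Yⁿ` loses
from `T_n(z + γ)ᶜ` only the at most `e^{√n z}` points of `φ(B)`, each of mass `≤ e^{-√n (z + γ)}`.
-/

open Set Real

section

variable {α β : Type*}

section prb

variable {p q : α → ℝ}

lemma prb_add_prb_compl (hp : Summable p) (s : Set α) : prb p s + prb p sᶜ = ∑' a, p a := by
  rw [prb, prb, ← (hp.indicator s).tsum_add (hp.indicator sᶜ)]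
  exact tsum_congr (s.indicator_self_add_compl_apply p)

lemma prb_diff_add_prb_inter (hp : Summable p) (s t : Set α) :
    prb p (s \ t) + prb p (s ∩ t) = prb p s := by
  rw [prb, prb, ← (hp.indicator _).tsum_add (hp.indicator _), prb,
    ← indicator_union_of_disjoint disjoint_sdiff_inter, sdiff_union_inter]

lemma prb_sub_prb (hp : Summable p) (hq : Summable q) (s : Set α) :
    prb q s - prb p s = ∑' a, s.indicator (fun a => q a - p a) a := by
  rw [indicator_sub, (hq.indicator s).tsum_sub (hp.indicator s), prb, prb]

lemma prb_le_prb_of_forall_pos (hp0 : ∀ a, 0 ≤ p a) (hp : Summable p) {s t : Set α}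
    (hst : ∀ a ∈ s, 0 < p a → a ∈ t) : prb p s ≤ prb p t := by
  refine (hp.indicator s).tsum_le_tsum (fun a => ?_) (hp.indicator t)
  by_cases hat : a ∈ t
  · rw [indicator_of_mem hat]
    exact indicator_le_self' (fun _ _ => hp0 _) a
  · rw [indicator_of_notMem hat]
    by_cases has : a ∈ s
    · rw [indicator_of_mem has]
      exact not_lt.mp fun hpa => hat (hst a has hpa)
    · rw [indicator_of_notMem has]

lemma prb_eq_sum_toFinset {s : Set α} (hs : s.Finite) : prb p s = ∑ a ∈ hs.toFinset, p a := by
  rw [prb, tsum_eq_sum (s := hs.toFinset) fun a ha => indicator_of_notMem (by simpa using ha) p]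
  exact Finset.sum_congr rfl fun a ha => indicator_of_mem (by simpa using ha) p

lemma prb_le_ncard_mul {s : Set α} (hs : s.Finite) {δ : ℝ} (hδ : ∀ a ∈ s, p a ≤ δ) :
    prb p s ≤ s.ncard * δ := by
  rw [prb_eq_sum_toFinset hs, ncard_eq_toFinset_card s hs, ← nsmul_eq_mul]
  exact Finset.sum_le_card_nsmul _ _ _ fun a ha => hδ a (by simpa using ha)

lemma ncard_mul_le_prb {s : Set α} (hs : s.Finite) {c : ℝ} (hc : ∀ a ∈ s, c ≤ p a) :
    s.ncard * c ≤ prb p s := by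
  rw [prb_eq_sum_toFinset hs, ncard_eq_toFinset_card s hs, ← nsmul_eq_mul]
  exact Finset.card_nsmul_le_sum _ _ _ fun a ha => hc a (by simpa using ha)

end prb

namespace IsPMF

variable {p q : α → ℝ}

lemma prb_nonneg (hp : IsPMF p) (s : Set α) : 0 ≤ prb p s :=
  tsum_nonneg fun a => indicator_apply_nonneg fun _ => hp.1 a

lemma prb_add_prb_compl (hp : IsPMF p) (s : Set α) : prb p s + prb p sᶜ = 1 := by
  rw [_root_.prb_add_prb_compl hp.2.summable, hp.2.tsum_eq]

lemma prb_le_one (hp : IsPMF p) (s : Set α) : prb p s ≤ 1 := by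
  linarith [hp.prb_add_prb_compl s, hp.prb_nonneg sᶜ]

lemma finite_setOf_lt (hp : IsPMF p) {c : ℝ} (hc : 0 < c) : {a | c < p a}.Finite := by
  have hsmall : ∀ᶠ a in Filter.cofinite, p a < c :=
    hp.2.summable.tendsto_cofinite_zero.eventually (eventually_lt_nhds hc)
  exact (Filter.eventually_cofinite.mp hsmall).subset fun a ha => not_lt.mpr (le_of_lt ha)

lemma ncard_setOf_lt_le (hp : IsPMF p) {c : ℝ} (hc : 0 < c) : ({a | c < p a}.ncard : ℝ) ≤ c⁻¹ := by
  rw [← one_div, le_div_iff₀ hc]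
  exact (ncard_mul_le_prb (hp.finite_setOf_lt hc) fun a ha => le_of_lt ha).trans (hp.prb_le_one _)

lemma two_mul_prb_sub_le_varDist (hp : IsPMF p) (hq : IsPMF q) (s : Set α) :
    2 * (prb q s - prb p s) ≤ varDist p q := by
  rw [varDist]
  have hpq : Summable fun a => q a - p a := hq.2.summable.sub hp.2.summable
  have hqp : Summable fun a => p a - q a := hp.2.summable.sub hq.2.summable
  have hpoint : ∀ a, s.indicator (fun a => q a - p a) a + sᶜ.indicator (fun a => p a - q a) a
      ≤ |p a - q a| := by
    intro a
    by_cases ha : a ∈ s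
    · rw [indicator_of_mem ha, indicator_of_notMem (not_not_intro ha), add_zero, abs_sub_comm]
      exact le_abs_self _
    · rw [indicator_of_notMem ha, indicator_of_mem (mem_compl ha), zero_add]
      exact le_abs_self _
  have hsum := ((hpq.indicator s).add (hqp.indicator sᶜ)).tsum_le_tsum hpoint hqp.abs
  rw [(hpq.indicator s).tsum_add (hqp.indicator sᶜ), ← prb_sub_prb hp.2.summable hq.2.summable,
    ← prb_sub_prb hq.2.summable hp.2.summable] at hsum
  linarith [hp.prb_add_prb_compl s, hq.prb_add_prb_compl s]

end IsPMF

section pushMap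

variable {P : α → ℝ} (φ : α → β)

lemma pushMap_eq_tsum_fiber (b : β) : pushMap P φ b = ∑' a : φ ⁻¹' {b}, P a :=
  (tsum_subtype _ P).symm

lemma hasSum_pushMap (hP : Summable P) : HasSum (pushMap P φ) (∑' a, P a) := by
  simpa only [← pushMap_eq_tsum_fiber] using hP.hasSum.tsum_fiberwise φ

lemma isPMF_pushMap (hP : IsPMF P) : IsPMF (pushMap P φ) :=
  ⟨fun _ => tsum_nonneg fun a => indicator_apply_nonneg fun _ => hP.1 a,
    hP.2.tsum_eq ▸ hasSum_pushMap φ hP.2.summable⟩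

lemma indicator_pushMap (s : Set β) :
    s.indicator (pushMap P φ) = pushMap ((φ ⁻¹' s).indicator P) φ := by
  funext b
  simp only [pushMap, indicator_indicator]
  by_cases hb : b ∈ s
  · have hfiber : {a | φ a = b} ⊆ φ ⁻¹' s := by
      rintro a rfl
      exact hb
    rw [indicator_of_mem hb, inter_eq_left.mpr hfiber, pushMap]
  · have hfiber : {a | φ a = b} ∩ φ ⁻¹' s = ∅ := by
      ext a
      simp only [mem_inter_iff, mem_ofPred_eq, mem_preimage, mem_empty_iff_false, iff_false, not_and]
      rintro rfl
      exact hb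
    simp [indicator_of_notMem hb, hfiber]

lemma prb_pushMap (hP : Summable P) (s : Set β) : prb (pushMap P φ) s = prb P (φ ⁻¹' s) := by
  rw [prb, indicator_pushMap, (hasSum_pushMap φ (hP.indicator _)).tsum_eq, prb]

end pushMap

theorem IsPMF.le_varDist_pushMap {P : α → ℝ} {Q : β → ℝ} (hP : IsPMF P) (hQ : IsPMF Q)
    (φ : α → β) {S B : Set α} {T : Set β} {δ : ℝ} (hδ : 0 ≤ δ) (hB : B.Finite)
    (hS : ∀ x ∉ B, 0 < P x → x ∈ S) (hT : ∀ y ∉ T, Q y ≤ δ) :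
    2 * prb Q Tᶜ - 2 * prb P S - 2 * (B.ncard * δ) ≤ varDist (pushMap P φ) Q := by
  set A := Tᶜ \ φ '' B
  have hpush : prb (pushMap P φ) A ≤ prb P S := by
    rw [prb_pushMap φ hP.2.summable]
    exact prb_le_prb_of_forall_pos hP.1 hP.2.summable fun x hx hPx =>
      hS x (fun hxB => hx.2 (mem_image_of_mem φ hxB)) hPx
  have hexcept : prb Q (Tᶜ ∩ φ '' B) ≤ B.ncard * δ :=
    calc prb Q (Tᶜ ∩ φ '' B)
        ≤ (Tᶜ ∩ φ '' B).ncard * δ :=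
          prb_le_ncard_mul ((hB.image φ).inter_of_right _) fun y hy => hT y hy.1
      _ ≤ (φ '' B).ncard * δ := by
          gcongr
          exacts [hB.image φ, inter_subset_right]
      _ ≤ B.ncard * δ := by
          gcongr
          exact ncard_image_le hB
  have hsplit := prb_diff_add_prb_inter hQ.2.summable Tᶜ (φ '' B)
  linarith [(isPMF_pushMap φ hP).two_mul_prb_sub_le_varDist hQ A]

lemma inv_mul_log_inv_lt_iff {s p : ℝ} (hs : 0 < s) (hp : 0 < p) (c : ℝ) :
    1 / s * log (1 / p) < c ↔ exp (-(s * c)) < p := by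
  rw [one_div, one_div, inv_mul_lt_iff₀ hs, log_inv, neg_lt, ← lt_log_iff_exp_lt hp]

end

theorem approximation_lemma_converse_general
    {𝒳 𝒴 : Type*}
    (P : 𝒳 → ℝ) (Q : 𝒴 → ℝ) (hP : IsPMF P) (hQ : IsPMF Q)
    (n : ℕ) (hn : 1 ≤ n) (z γ : ℝ)
    (φ : 𝒳 → 𝒴) :
    varDist (pushMap P φ) Q ≥
      2 * prb Q ({y | (1 / Real.sqrt n) * Real.log (1 / Q y) ≤ z + γ}ᶜ)
        - 2 * prb P {x | z ≤ (1 / Real.sqrt n) * Real.log (1 / P x)}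
        - 2 * Real.exp (-(Real.sqrt n * γ)) := by
  set s := Real.sqrt n
  have hs : 0 < s := sqrt_pos.mpr (by exact_mod_cast hn)
  -- `log (1 / 0) = 0`, so points of mass zero need not lie in `S_n(z)`.
  have hS : ∀ x ∉ {x | exp (-(s * z)) < P x}, 0 < P x → x ∈ {x | z ≤ 1 / s * log (1 / P x)} :=
    fun x hx hPx => not_lt.mp fun h => hx ((inv_mul_log_inv_lt_iff hs hPx z).mp h)
  have hT : ∀ y ∉ {y | 1 / s * log (1 / Q y) ≤ z + γ}, Q y ≤ exp (-(s * (z + γ))) := by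
    intro y hy
    rcases (hQ.1 y).eq_or_lt with hQy | hQy
    · exact hQy ▸ (exp_pos _).le
    · exact not_lt.mp fun h => hy ((inv_mul_log_inv_lt_iff hs hQy _).mpr h).le
  have hcard : ({x | exp (-(s * z)) < P x}.ncard : ℝ) * exp (-(s * (z + γ))) ≤ exp (-(s * γ)) :=
    calc _ ≤ (exp (-(s * z)))⁻¹ * exp (-(s * (z + γ))) := by
          gcongr
          exact hP.ncard_setOf_lt_le (exp_pos _)
      _ = exp (-(s * γ)) := by
          rw [← exp_neg, ← exp_add]
          ring_nf
  linarith [hP.le_varDist_pushMap hQ φ (exp_pos _).le (hP.finite_setOf_lt (exp_pos _)) hS hT]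

/-- Lemma 2 (Han): for arbitrary general sources `X`, `Y`, every `n ≥ 1`, every real
`z_n`, every `γ > 0` and every mapping `φ_n : 𝒳ⁿ → 𝒴ⁿ`,
`d(φ_n(Xⁿ), Yⁿ) ≥ 2 Pr{Yⁿ ∉ T_n(z_n+γ)} − 2 Pr{Xⁿ ∈ S_n(z_n)} − 2 e^{−√n γ}`,
where `S_n(c) = {x | (1/√n) log(1/P_{Xⁿ}(x)) ≥ c}` and
`T_n(c) = {y | (1/√n) log(1/P_{Yⁿ}(y)) ≤ c}`. -/
theorem approximation_lemma_converse
    {𝒳 𝒴 : Type*} [Countable 𝒳] [Countable 𝒴]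
    (P : 𝒳 → ℝ) (Q : 𝒴 → ℝ) (hP : IsPMF P) (hQ : IsPMF Q)
    (n : ℕ) (hn : 1 ≤ n) (z γ : ℝ) (hγ : 0 < γ)
    (φ : 𝒳 → 𝒴) :
    varDist (pushMap P φ) Q ≥
      2 * prb Q ({y | (1 / Real.sqrt n) * Real.log (1 / Q y) ≤ z + γ}ᶜ)
        - 2 * prb P {x | z ≤ (1 / Real.sqrt n) * Real.log (1 / P x)}
        - 2 * Real.exp (-(Real.sqrt n * γ)) :=
  approximation_lemma_converse_general P Q hP hQ n hn z γ φ
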